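/- Let k and ℓ be integers with 0 < ℓ < k. The Czech hat game on the directed cycle on ZMod 3 (arcs 0→1, 1→2, 2→0) with constant hatness h ≡ k and guessness g 0 = k − ℓ, g 1 = k − ℓ, g 2 = ℓ is winnable if and only if ℓ divides k. -/
import Mathlib


/-- A Czech hat game on the digraph with adjacency `D` (sage `v` sees sage `u`
iff `D v u`), guessness `g`, and hatness `h`, is winnable: there is a strategy
assigning to each sage `v` a set of `g v` guesses, depending only on the hats
she sees, such that for every coloring some sage guesses her own hat color. -/
def HatGame.Winnable {V : Type*} (D : V → V → Prop) (g h : V → ℕ) : Prop :=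
  ∃ F : ∀ v : V, (∀ u : V, Fin (h u)) → Finset (Fin (h v)),
    (∀ (v : V) (c c' : ∀ u : V, Fin (h u)),
        (∀ u : V, D v u → c u = c' u) → F v c = F v c') ∧
    (∀ (v : V) (c : ∀ u : V, Fin (h u)), (F v c).card = g v) ∧
    (∀ c : ∀ u : V, Fin (h u), ∃ v : V, c v ∈ F v c)

open Finset

lemma czech_aux (k ℓ : ℕ) (hl : 0 < ℓ) (hk : ℓ < k)
    (f0 f1 f2 : Fin k → Finset (Fin k))
    (h0 : ∀ x, (f0 x).card = k - ℓ) (h1 : ∀ x, (f1 x).card = k - ℓ)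
    (h2 : ∀ x, (f2 x).card = ℓ)
    (hwin : ∀ c0 c1 c2, c0 ∈ f0 c1 ∨ c1 ∈ f1 c2 ∨ c2 ∈ f2 c0) : ℓ ∣ k := by
  classical
  set A0 : Fin k → Finset (Fin k) := fun x => (f0 x)ᶜ with hA0def
  set A1 : Fin k → Finset (Fin k) := fun x => (f1 x)ᶜ with hA1def
  have cardA0 : ∀ x, (A0 x).card = ℓ := by
    intro x
    rw [hA0def]
    simp only [Finset.card_compl, Fintype.card_fin, h0]
    omega
  have cardA1 : ∀ x, (A1 x).card = ℓ := by
    intro x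
    rw [hA1def]
    simp only [Finset.card_compl, Fintype.card_fin, h1]
    omega
  have key : ∀ c0 c1 c2, c0 ∈ A0 c1 → c1 ∈ A1 c2 → c2 ∈ f2 c0 := by
    intro c0 c1 c2 hc0 hc1
    rcases hwin c0 c1 c2 with h | h | h
    · exact absurd h (by simpa [hA0def, Finset.mem_compl] using hc0)
    · exact absurd h (by simpa [hA1def, Finset.mem_compl] using hc1)
    · exact h
  set P : Fin k → Finset (Fin k) := fun c2 => (A1 c2).biUnion A0 with hPdef
  set Q : Fin k → Finset (Fin k) :=
    fun c2 => univ.filter (fun c0 => c2 ∈ f2 c0) with hQdef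
  have hPQ : ∀ c2, P c2 ⊆ Q c2 := by
    intro c2 c0 hc0
    rw [hPdef] at hc0
    rcases Finset.mem_biUnion.1 hc0 with ⟨c1, hc1, hc0'⟩
    rw [hQdef]
    simpa using key c0 c1 c2 hc0' hc1
  have hPge : ∀ c2, ℓ ≤ (P c2).card := by
    intro c2
    obtain ⟨c1, hc1⟩ := Finset.card_pos.1 (by rw [cardA1 c2]; exact hl)
    calc ℓ = (A0 c1).card := (cardA0 c1).symm
    _ ≤ (P c2).card := Finset.card_le_card (Finset.subset_biUnion_of_mem A0 hc1)
  have sumQ : ∑ c2 : Fin k, (Q c2).card = k * ℓ := by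
    have e1 : ∀ c2 : Fin k, (Q c2).card = ∑ c0 : Fin k, if c2 ∈ f2 c0 then 1 else 0 := by
      intro c2; rw [hQdef]; exact Finset.card_filter _ _
    rw [Finset.sum_congr rfl (fun c2 _ => e1 c2), Finset.sum_comm]
    have e2 : ∀ c0 : Fin k, (∑ c2 : Fin k, if c2 ∈ f2 c0 then 1 else 0) = ℓ := by
      intro c0
      rw [← h2 c0, ← Finset.card_filter]
      congr 1
      exact Finset.filter_univ_mem _
    rw [Finset.sum_congr rfl (fun c0 _ => e2 c0)]
    simp [mul_comm]
  have hQcard : ∀ c2, (Q c2).card = ℓ := by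
    intro c2
    by_contra hne
    have hgt : ℓ < (Q c2).card := lt_of_le_of_ne (le_trans (hPge c2) (Finset.card_le_card (hPQ c2))) (Ne.symm hne)
    have : ∑ _c2 : Fin k, ℓ < ∑ c2 : Fin k, (Q c2).card := by
      apply Finset.sum_lt_sum
      · intro i _; exact le_trans (hPge i) (Finset.card_le_card (hPQ i))
      · exact ⟨c2, Finset.mem_univ c2, hgt⟩
    simp only [Finset.sum_const, Finset.card_univ, Fintype.card_fin, smul_eq_mul, sumQ] at this
    omega
  have hPeqQ : ∀ c2, P c2 = Q c2 := fun c2 =>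
    Finset.eq_of_subset_of_card_le (hPQ c2) (by rw [hQcard c2]; exact hPge c2)
  have hPcard : ∀ c2, (P c2).card = ℓ := fun c2 => by rw [hPeqQ c2, hQcard c2]
  have hA0P : ∀ c2 c1, c1 ∈ A1 c2 → A0 c1 = P c2 := by
    intro c2 c1 hc1
    apply Finset.eq_of_subset_of_card_le (Finset.subset_biUnion_of_mem A0 hc1)
    rw [hPcard c2, cardA0 c1]
  set S : Finset (Finset (Fin k)) := univ.image P with hSdef
  have cardS : ∀ s ∈ S, s.card = ℓ := by
    intro s hs
    rw [hSdef] at hs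
    rcases Finset.mem_image.1 hs with ⟨c2, _, rfl⟩
    exact hPcard c2
  -- k ≤ S.card * ℓ
  have cover : univ ⊆ S.biUnion id := by
    intro c0 _
    obtain ⟨c2, hc2⟩ := Finset.card_pos.1 (by rw [h2 c0]; exact hl)
    have : c0 ∈ P c2 := by
      rw [hPeqQ c2, hQdef]; simp [hc2]
    exact Finset.mem_biUnion.2 ⟨P c2, Finset.mem_image_of_mem P (Finset.mem_univ c2), this⟩
  have hub : k ≤ S.card * ℓ := by
    calc k = (univ : Finset (Fin k)).card := by simp
    _ ≤ (S.biUnion id).card := Finset.card_le_card cover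
    _ ≤ ∑ s ∈ S, (id s).card := Finset.card_biUnion_le
    _ = ∑ _s ∈ S, ℓ := Finset.sum_congr rfl (fun s hs => cardS s hs)
    _ = S.card * ℓ := by rw [Finset.sum_const, smul_eq_mul]
  -- S.card * ℓ ≤ k
  set G : Finset (Fin k) → Finset (Fin k) :=
    fun s => univ.filter (fun c1 => A0 c1 = s) with hGdef
  have hGge : ∀ s ∈ S, ℓ ≤ (G s).card := by
    intro s hs
    rw [hSdef] at hs
    rcases Finset.mem_image.1 hs with ⟨c2, _, rfl⟩
    have : A1 c2 ⊆ G (P c2) := by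
      intro c1 hc1
      rw [hGdef]
      simp [hA0P c2 c1 hc1]
    calc ℓ = (A1 c2).card := (cardA1 c2).symm
    _ ≤ _ := Finset.card_le_card this
  have hdisj : ∀ s ∈ S, ∀ t ∈ S, s ≠ t → Disjoint (G s) (G t) := by
    intro s _ t _ hst
    rw [Finset.disjoint_left]
    intro c1 hc1s hc1t
    rw [hGdef] at hc1s hc1t
    simp only [Finset.mem_filter] at hc1s hc1t
    exact hst (hc1s.2 ▸ hc1t.2 ▸ rfl)
  have hlb : S.card * ℓ ≤ k := by
    calc S.card * ℓ = ∑ _s ∈ S, ℓ := by rw [Finset.sum_const, smul_eq_mul]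
    _ ≤ ∑ s ∈ S, (G s).card := Finset.sum_le_sum hGge
    _ = (S.biUnion G).card := (Finset.card_biUnion hdisj).symm
    _ ≤ (univ : Finset (Fin k)).card := Finset.card_le_card (Finset.subset_univ _)
    _ = k := by simp
  exact ⟨S.card, (le_antisymm hub hlb).trans (mul_comm _ _)⟩

lemma czech_fiber_card (ℓ m b : ℕ) (hl : 0 < ℓ) (hb : b < m) :
    (Finset.univ.filter (fun y : Fin (ℓ * m) => y.val / ℓ = b)).card = ℓ := by
  have key : (Finset.univ.filter (fun y : Fin (ℓ * m) => y.val / ℓ = b)).card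
      = (Finset.univ : Finset (Fin ℓ)).card := by
    refine Finset.card_bij' (fun (y : Fin (ℓ * m)) _ => (⟨y.val % ℓ, Nat.mod_lt _ hl⟩ : Fin ℓ))
      (fun (i : Fin ℓ) _ => (⟨ℓ * b + i.val, by
        calc ℓ * b + i.val < ℓ * b + ℓ := by omega
        _ = ℓ * (b + 1) := by ring
        _ ≤ ℓ * m := Nat.mul_le_mul_left ℓ hb⟩ : Fin (ℓ * m)))
      ?_ ?_ ?_ ?_
    · intro y _; exact Finset.mem_univ _
    · intro i _
      simp only [Finset.mem_filter, Finset.mem_univ, true_and]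
      rw [Nat.mul_add_div hl, Nat.div_eq_of_lt i.isLt, Nat.add_zero]
    · intro y hy
      simp only [Finset.mem_filter, Finset.mem_univ, true_and] at hy
      apply Fin.ext
      show ℓ * b + y.val % ℓ = y.val
      conv_rhs => rw [← Nat.div_add_mod y.val ℓ, hy]
    · intro i _
      apply Fin.ext
      show (ℓ * b + i.val) % ℓ = i.val
      simp [Nat.mul_add_mod, Nat.mod_eq_of_lt i.isLt]
  simpa using key

lemma czech_fwd (k ℓ : ℕ) (hl : 0 < ℓ) (hk : ℓ < k) (hd : ℓ ∣ k) :
    HatGame.Winnable (fun i j : ZMod 3 => j = i + 1)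
        (fun i => if i = 2 then ℓ else k - ℓ) (fun _ => k) := by
  classical
  obtain ⟨m, rfl⟩ := hd
  have fib : ∀ x : Fin (ℓ * m),
      (Finset.univ.filter (fun y : Fin (ℓ * m) => y.val / ℓ = x.val / ℓ)).card = ℓ := by
    intro x
    exact czech_fiber_card ℓ m _ hl ((Nat.div_lt_iff_lt_mul hl).2
      (by rw [Nat.mul_comm m ℓ]; exact x.isLt))
  refine ⟨fun v c => if v = 2 then
      Finset.univ.filter (fun x : Fin (ℓ * m) => x.val / ℓ = (c (v + 1)).val / ℓ)
    else Finset.univ.filter (fun x : Fin (ℓ * m) => ¬ x.val / ℓ = (c (v + 1)).val / ℓ),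
    ?_, ?_, ?_⟩
  · intro v c c' hcc
    have : c (v + 1) = c' (v + 1) := hcc (v + 1) rfl
    dsimp only
    rw [this]
  · intro v c
    by_cases hv : v = 2
    · simp only [hv, if_pos rfl]
      exact fib _
    · simp only [if_neg hv]
      have := Finset.card_filter_add_card_filter_not
        (s := (Finset.univ : Finset (Fin (ℓ * m))))
        (p := fun x => x.val / ℓ = (c (v + 1)).val / ℓ)
      rw [fib (c (v+1)), Finset.card_univ, Fintype.card_fin] at this
      omega
  · intro c
    by_cases h01 : (c 0).val / ℓ = (c 1).val / ℓ
    · by_cases h12 : (c 1).val / ℓ = (c 2).val / ℓ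
      · refine ⟨2, ?_⟩
        have h21 : (2 + 1 : ZMod 3) = 0 := by decide
        dsimp only
        rw [if_pos rfl, h21]
        simp only [Finset.mem_filter, Finset.mem_univ, true_and]
        exact (h01.trans h12).symm
      · refine ⟨1, ?_⟩
        have : (1 + 1 : ZMod 3) = 2 := by decide
        have h12' : (1 : ZMod 3) ≠ 2 := by decide
        simp only [if_neg h12', this, Finset.mem_filter, Finset.mem_univ, true_and]
        exact h12
    · refine ⟨0, ?_⟩
      have : (0 + 1 : ZMod 3) = 1 := by decide
      have h02 : (0 : ZMod 3) ≠ 2 := by decide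
      simp only [if_neg h02, this, Finset.mem_filter, Finset.mem_univ, true_and]
      exact h01

/-- The Czech game on the directed triangle with constant hatness `k` and
guessnesses `k - ℓ, k - ℓ, ℓ` is winnable iff `ℓ ∣ k`. -/
theorem czech_directed_triangle_winnable_iff (k ℓ : ℕ) (hl : 0 < ℓ) (hk : ℓ < k) :
    HatGame.Winnable (fun i j : ZMod 3 => j = i + 1)
        (fun i => if i = 2 then ℓ else k - ℓ) (fun _ => k) ↔ ℓ ∣ k := by
  constructor
  · rintro ⟨F, hsee, hcard, hwin⟩
    classical
    set f0 : Fin k → Finset (Fin k) := fun x => F 0 (fun _ => x) with hf0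
    set f1 : Fin k → Finset (Fin k) := fun x => F 1 (fun _ => x) with hf1
    set f2 : Fin k → Finset (Fin k) := fun x => F 2 (fun _ => x) with hf2
    have e0 : ∀ c, F 0 c = f0 (c 1) := by
      intro c
      rw [hf0]
      refine hsee 0 c (fun _ => c 1) ?_
      intro u hu
      have : u = 1 := by rw [hu]; decide
      rw [this]
    have e1 : ∀ c, F 1 c = f1 (c 2) := by
      intro c
      rw [hf1]
      refine hsee 1 c (fun _ => c 2) ?_
      intro u hu
      have : u = 2 := by rw [hu]; decide
      rw [this]
    have e2 : ∀ c, F 2 c = f2 (c 0) := by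
      intro c
      rw [hf2]
      refine hsee 2 c (fun _ => c 0) ?_
      intro u hu
      have : u = 0 := by rw [hu]; decide
      rw [this]
    have h0 : ∀ x, (f0 x).card = k - ℓ := by
      intro x
      have := hcard 0 (fun _ => x)
      dsimp only at this
      rwa [if_neg (by decide : ¬ (0 : ZMod 3) = 2)] at this
    have h1 : ∀ x, (f1 x).card = k - ℓ := by
      intro x
      have := hcard 1 (fun _ => x)
      dsimp only at this
      rwa [if_neg (by decide : ¬ (1 : ZMod 3) = 2)] at this
    have h2 : ∀ x, (f2 x).card = ℓ := by
      intro x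
      have := hcard 2 (fun _ => x)
      dsimp only at this
      rwa [if_pos rfl] at this
    have hwin' : ∀ c0 c1 c2 : Fin k, c0 ∈ f0 c1 ∨ c1 ∈ f1 c2 ∨ c2 ∈ f2 c0 := by
      intro c0 c1 c2
      set c : ∀ u : ZMod 3, Fin k :=
        fun v => if v = 0 then c0 else if v = 1 then c1 else c2 with hc
      have hc0 : c 0 = c0 := by simp [hc]
      have hc1 : c 1 = c1 := by simp [hc]
      have hc2 : c 2 = c2 := by
        simp only [hc]
        rw [if_neg (by decide : ¬ (2 : ZMod 3) = 0), if_neg (by decide : ¬ (2 : ZMod 3) = 1)]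
      obtain ⟨v, hv⟩ := hwin c
      have hv3 := (by decide : ∀ v : ZMod 3, v = 0 ∨ v = 1 ∨ v = 2) v
      rcases hv3 with rfl | rfl | rfl
      · left; rw [e0 c, hc1] at hv; rwa [hc0] at hv
      · right; left; rw [e1 c, hc2] at hv; rwa [hc1] at hv
      · right; right; rw [e2 c, hc0] at hv; rwa [hc2] at hv
    exact czech_aux k ℓ hl hk f0 f1 f2 h0 h1 h2 hwin'
  · exact czech_fwd k ℓ hl hk
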